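/- arXiv:1506.03804 — 2 statements merged into one kernel-verified Lean document; each statement's English description precedes it below -/
import Mathlib

section
/- Let $(X_j)_{j \geq 1}$ be an i.i.d. sequence of real random variables whose common law has a density $f$ with respect to Lebesgue measure on $\mathbf{R}$ that is positive Lebesgue-almost everywhere. Set $Y_j = X_1 + \cdots + X_j$, fix a measurable set $A \subseteq \mathbf{R}$, and let $\tau_A = \inf\{j \geq 1 : Y_j \in A\}$; assume $\mathbf{P}[\tau_A < \infty] = 1$. Then the law of $Y_{\tau_A}$ has a density with respect to Lebesgue measure restricted to $A$ which is positive Lebesgue-almost everywhere on $A$. -/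
open MeasureTheory ProbabilityTheory Set
open scoped ENNReal NNReal

/-! The law `ν` of `Y_τ` and Lebesgue measure on `A` are mutually absolutely continuous, so the
Radon–Nikodym derivative of `ν` is a density that is positive a.e. on `A`. On one side, each
`Y (n + 1) = Y n + X n` with `X n` independent of `Y n` and having a density, so its law is a
convolution against an absolutely continuous measure; as `τ ≥ 1` and `Y_τ ∈ A` a.s., this gives
`ν ≪ volume|_A`. On the other side, on the event `{X 0 ∈ A}` the walk stops at time `1` with
`Y_τ = X 0`, so `ν` dominates the law of `X 0` restricted to `A`, which is equivalent to
`volume|_A` because `f > 0` a.e. -/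

lemma Nat.sInf_le_iff {S : Set ℕ} {k : ℕ} : sInf S ≤ k ↔ S = ∅ ∨ ∃ n ≤ k, n ∈ S := by
  rcases S.eq_empty_or_nonempty with rfl | hS
  · simp
  · simp only [hS.ne_empty, false_or]
    exact ⟨fun h => ⟨sInf S, h, Nat.sInf_mem hS⟩, fun ⟨n, hnk, hn⟩ => (Nat.sInf_le hn).trans hnk⟩

lemma measurable_sInf_setOf_nat {Ω : Type*} [MeasurableSpace Ω] {p : ℕ → Ω → Prop}
    (hp : ∀ n, MeasurableSet {ω | p n ω}) : Measurable fun ω => sInf {n | p n ω} := by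
  refine measurable_of_Iic fun k => ?_
  have : (fun ω => sInf {n | p n ω}) ⁻¹' Iic k =
      (⋂ n, {ω | p n ω}ᶜ) ∪ ⋃ n ∈ Finset.range (k + 1), {ω | p n ω} := by
    ext ω
    simp [Nat.sInf_le_iff, eq_empty_iff_forall_notMem]
  rw [this]
  exact (MeasurableSet.iInter fun n => (hp n).compl).union
    (Finset.measurableSet_biUnion _ fun n _ => hp n)

section StoppedValue

variable {Ω β ι : Type*} [MeasurableSpace Ω] [MeasurableSpace β] {μ : Measure Ω}

lemma measurable_stoppedValue_of_countable [Countable ι] [MeasurableSpace ι]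
    [MeasurableSingletonClass ι] {Y : ι → Ω → β} {τ : Ω → ι} (hY : ∀ i, Measurable (Y i))
    (hτ : Measurable τ) : Measurable fun ω => Y (τ ω) ω :=
  (measurable_from_prod_countable_left (f := fun p : Ω × ι => Y p.2 p.1) hY).comp
    (measurable_id.prodMk hτ)

lemma map_stoppedValue_absolutelyContinuous [Countable ι] {Y : ι → Ω → β} {τ : Ω → ι}
    {T : Set ι} {ρ : Measure β} (hY : ∀ i, Measurable (Y i))
    (hZ : Measurable fun ω => Y (τ ω) ω) (hτ : ∀ᵐ ω ∂μ, τ ω ∈ T)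
    (hρ : ∀ i ∈ T, μ.map (Y i) ≪ ρ) : μ.map (fun ω => Y (τ ω) ω) ≪ ρ := by
  refine Measure.AbsolutelyContinuous.mk fun s hs hs0 => ?_
  rw [Measure.map_apply hZ hs]
  have hYs : ∀ i ∈ T, μ (Y i ⁻¹' s) = 0 := fun i hi => by
    rw [← Measure.map_apply (hY i) hs]
    exact hρ i hi hs0
  refine measure_mono_null (fun ω hω => ?_)
    (measure_union_null (ae_iff.1 hτ) (measure_biUnion_null_iff (to_countable T) |>.2 hYs))
  by_cases hω' : τ ω ∈ T
  · exact Or.inr (mem_biUnion hω' hω)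
  · exact Or.inl hω'

lemma restrict_map_le_map_of_eq {W Z : Ω → β} (hW : Measurable W) (hZ : Measurable Z)
    {A : Set β} (hA : MeasurableSet A) (h : ∀ ω, W ω ∈ A → Z ω = W ω) :
    (μ.map W).restrict A ≤ μ.map Z := by
  refine Measure.le_iff.2 fun s hs => ?_
  rw [Measure.restrict_apply hs, Measure.map_apply hW (hs.inter hA), Measure.map_apply hZ hs]
  exact measure_mono fun ω ⟨hωs, hωA⟩ => by simpa [mem_preimage, h ω hωA] using hωs

end StoppedValue

lemma map_sum_range_succ_absolutelyContinuous {Ω G : Type*} [MeasurableSpace Ω]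
    {μ : Measure Ω} [IsFiniteMeasure μ] [AddCommGroup G] [MeasurableSpace G]
    [MeasurableAdd₂ G] {ρ : Measure G} [ρ.IsAddLeftInvariant] {X : ℕ → Ω → G}
    (hX : ∀ i, Measurable (X i)) (hind : iIndepFun X μ) (hρ : ∀ i, μ.map (X i) ≪ ρ) (n : ℕ) :
    μ.map (∑ i ∈ Finset.range (n + 1), X i) ≪ ρ := by
  rw [Finset.sum_range_succ, (hind.indepFun_finsetSum_of_notMem hX
    Finset.notMem_range_self).map_add_eq_map_conv_map (by fun_prop) (hX n)]
  exact Measure.conv_absolutelyContinuous (hρ n)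

lemma Measure.exists_withDensity_pos_of_absolutelyContinuous {α : Type*} [MeasurableSpace α]
    {ν m : Measure α} [ν.HaveLebesgueDecomposition m] (hνm : ν ≪ m) (hmν : m ≪ ν) :
    ∃ g : α → ℝ≥0∞, Measurable g ∧ ν = m.withDensity g ∧ ∀ᵐ x ∂m, 0 < g x :=
  ⟨ν.rnDeriv m, Measure.measurable_rnDeriv _ _, (Measure.withDensity_rnDeriv_eq ν m hνm).symm,
    hmν.ae_le (Measure.rnDeriv_pos hνm)⟩

/-- If `(X_j)` is i.i.d. with an a.e. positive density `f` on `ℝ`, `Y_j = X_1 + ⋯ + X_j`,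
and `τ_A` is the a.s. finite first hitting time of a measurable set `A` by the walk, then
the law of `Y_{τ_A}` has a density with respect to Lebesgue measure restricted to `A` which
is positive Lebesgue-a.e. on `A`. -/
theorem stmt_4 {Ω : Type*} [MeasurableSpace Ω] (μ : Measure Ω) [IsProbabilityMeasure μ]
    (X : ℕ → Ω → ℝ) (hXmeas : ∀ j, Measurable (X j))
    (hindep : iIndepFun X μ)
    (f : ℝ → ℝ≥0∞) (hf : Measurable f)
    (hfpos : ∀ᵐ x ∂(volume : Measure ℝ), 0 < f x)
    (hXlaw : ∀ j, μ.map (X j) = volume.withDensity f)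
    (Y : ℕ → Ω → ℝ) (hY : ∀ j ω, Y j ω = ∑ i ∈ Finset.range j, X i ω)
    (A : Set ℝ) (hA : MeasurableSet A)
    (τ : Ω → ℕ) (hτ : ∀ ω, τ ω = sInf {j : ℕ | 1 ≤ j ∧ Y j ω ∈ A})
    (hhit : ∀ᵐ ω ∂μ, ∃ j : ℕ, 1 ≤ j ∧ Y j ω ∈ A) :
    ∃ g : ℝ → ℝ≥0∞, Measurable g ∧
      μ.map (fun ω => Y (τ ω) ω) = (volume.restrict A).withDensity g ∧
      ∀ᵐ y ∂(volume.restrict A), 0 < g y := by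
  have hY' : ∀ n, Y n = ∑ i ∈ Finset.range n, X i := fun n => funext fun ω => by
    simp [hY, Finset.sum_apply]
  have hYm : ∀ n, Measurable (Y n) := fun n => hY' n ▸ by fun_prop
  have hτm : Measurable τ := funext hτ ▸
    measurable_sInf_setOf_nat fun n => (MeasurableSet.const (1 ≤ n)).inter (hYm n hA)
  have hZm := measurable_stoppedValue_of_countable hYm hτm
  have hτ_mem : ∀ᵐ ω ∂μ, 1 ≤ τ ω ∧ Y (τ ω) ω ∈ A := hhit.mono fun ω h => hτ ω ▸ Nat.sInf_mem h
  have hτ_one : ∀ ω, X 0 ω ∈ A → Y (τ ω) ω = X 0 ω := fun ω hω => by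
    have hY1 : Y 1 ω = X 0 ω := by simp [hY]
    have h1 : 1 ∈ {j : ℕ | 1 ≤ j ∧ Y j ω ∈ A} := ⟨le_rfl, hY1 ▸ hω⟩
    rw [hτ, le_antisymm (Nat.sInf_le h1) (Nat.sInf_mem ⟨1, h1⟩).1, hY1]
  have hlaw : ∀ n ∈ Ici 1, μ.map (Y n) ≪ volume := fun n hn => by
    obtain ⟨m, rfl⟩ := Nat.exists_eq_add_of_le' hn
    exact hY' _ ▸ map_sum_range_succ_absolutelyContinuous hXmeas hindep
      (fun i => hXlaw i ▸ withDensity_absolutelyContinuous _ _) m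
  have hac : μ.map (fun ω => Y (τ ω) ω) ≪ volume.restrict A := by
    have hZA : ∀ᵐ y ∂μ.map (fun ω => Y (τ ω) ω), y ∈ A :=
      (ae_map_iff hZm.aemeasurable hA).2 (hτ_mem.mono fun ω h => h.2)
    exact Measure.restrict_eq_self_of_ae_mem hZA ▸
      (map_stoppedValue_absolutelyContinuous hYm hZm (hτ_mem.mono fun ω h => h.1) hlaw).restrict A
  have hac' : volume.restrict A ≪ μ.map (fun ω => Y (τ ω) ω) :=
    ((withDensity_absolutelyContinuous' hf.aemeasurable (hfpos.mono fun x hx => hx.ne')).restrict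
      A).trans (Measure.absolutelyContinuous_of_le
        (hXlaw 0 ▸ restrict_map_le_map_of_eq (hXmeas 0) hZm hA hτ_one))
  exact Measure.exists_withDensity_pos_of_absolutelyContinuous hac hac'
end

section
/- Fix $u > 0$ and $r > u$. Let $\phi$ be harmonic on the open strip/annulus $(-r, 0) \times (0, 2\pi)$ (with periodic identification in the second coordinate, i.e., harmonic on the cylinder annulus $[-r,0] \times [0,2\pi] \subseteq \mathcal{Q}$), continuous up to the boundary, and let $\phi_1$ (resp. $\phi_r$) be the bounded harmonic function on the half-cylinder $\mathcal{Q}_-$ (resp. $\mathcal{Q}_- - r$, the half-cylinder $\{\mathrm{Re}(z) \le -r\}$ shifted appropriately) with the same boundary values as $\phi$ on $\partial \mathcal{Q}_-$ (resp. on $\partial \mathcal{Q}_- - r$). Then for $z$ with $\mathrm{Re}(z) = -u$, $\phi(z) = (1 - u/r)\, \phi_1(z) + (u/r)\, \phi_r(z) + o(1)$ as $r \to \infty$ (uniformly for boundary data bounded by a fixed constant). -/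
/-!
The differences `φ - φ₁` and `φ - φᵣ` are harmonic on the annulus `-r < Re z < 0`; the first
vanishes on `Re z = 0` and is bounded by `2M` on `Re z = -r`, the second the other way round.
A harmonic function on the annulus is bounded by the linear interpolation (in `Re z`) of its
bounds on the two boundary circles: subtract that interpolation and apply the maximum principle,
which holds because the closed annulus is compact and an interior maximum propagates to the
boundary by connectedness. At `Re z = -u` this gives `|φ - φ₁| ≤ 2Mu/r` and
`|φ - φᵣ| ≤ 2M(1 - u/r)`, so the convex combination `(1 - u/r) φ₁ + (u/r) φᵣ` is within
`4Mu/r` of `φ`.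
-/

open Complex Set

/-- A real function is harmonic on an open subset of `ℂ` if it is locally the real part of
a holomorphic function. -/
def HarmonicOnC (φ : ℂ → ℝ) (U : Set ℂ) : Prop :=
  ∀ z ∈ U, ∃ (V : Set ℂ) (f : ℂ → ℂ), IsOpen V ∧ z ∈ V ∧ V ⊆ U ∧
    DifferentiableOn ℂ f V ∧ ∀ w ∈ V, φ w = (f w).re

open Filter Topology Function

namespace HarmonicOnC

variable {φ ψ : ℂ → ℝ} {U U' : Set ℂ}

theorem isOpen (h : HarmonicOnC φ U) : IsOpen U :=
  isOpen_iff_forall_mem_open.2 fun z hz =>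
    let ⟨V, _, hV, hzV, hVU, _⟩ := h z hz
    ⟨V, hVU, hV, hzV⟩

theorem continuousOn (h : HarmonicOnC φ U) : ContinuousOn φ U := by
  intro z hz
  obtain ⟨V, f, hV, hzV, -, hf, hφf⟩ := h z hz
  have hφ : φ =ᶠ[𝓝 z] fun w => (f w).re := eventually_of_mem (hV.mem_nhds hzV) hφf
  exact ((continuous_re.continuousAt.comp
    ((hf.differentiableAt (hV.mem_nhds hzV)).continuousAt)).congr hφ.symm).continuousWithinAt

theorem mono (h : HarmonicOnC φ U) (hU' : IsOpen U') (hsub : U' ⊆ U) : HarmonicOnC φ U' := by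
  intro z hz
  obtain ⟨V, f, hV, hzV, -, hf, hφf⟩ := h z (hsub hz)
  exact ⟨V ∩ U', f, hV.inter hU', ⟨hzV, hz⟩, inter_subset_right, hf.mono inter_subset_left,
    fun w hw => hφf w hw.1⟩

theorem neg (h : HarmonicOnC φ U) : HarmonicOnC (-φ) U := by
  intro z hz
  obtain ⟨V, f, hV, hzV, hVU, hf, hφf⟩ := h z hz
  exact ⟨V, -f, hV, hzV, hVU, hf.neg, fun w hw => by simp [hφf w hw]⟩

theorem sub (hφ : HarmonicOnC φ U) (hψ : HarmonicOnC ψ U) : HarmonicOnC (φ - ψ) U := by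
  intro z hz
  obtain ⟨V, f, hV, hzV, hVU, hf, hφf⟩ := hφ z hz
  obtain ⟨V', g, hV', hzV', -, hg, hψg⟩ := hψ z hz
  exact ⟨V ∩ V', f - g, hV.inter hV', ⟨hzV, hzV'⟩, inter_subset_left.trans hVU,
    (hf.mono inter_subset_left).sub (hg.mono inter_subset_right),
    fun w hw => by simp [hφf w hw.1, hψg w hw.2]⟩

end HarmonicOnC

theorem harmonicOnC_const_add_mul_re {U : Set ℂ} (hU : IsOpen U) (α β : ℝ) :
    HarmonicOnC (fun z => α + β * z.re) U := fun z hz =>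
  ⟨U, fun w => α + β * w, hU, hz, Subset.rfl, by fun_prop, fun w _ => by simp⟩

theorem HarmonicOnC.eventually_eq_of_isLocalMax {φ : ℂ → ℝ} {U : Set ℂ} {z : ℂ}
    (h : HarmonicOnC φ U) (hz : z ∈ U) (hmax : IsLocalMax φ z) : ∀ᶠ w in 𝓝 z, φ w = φ z := by
  obtain ⟨V, f, hV, hzV, -, hf, hφf⟩ := h z hz
  have hV' : V ∈ 𝓝 z := hV.mem_nhds hzV
  -- `exp ∘ f` is holomorphic with modulus `exp ∘ φ`, so the maximum modulus principle applies.
  have hnorm : ∀ w ∈ V, ‖cexp (f w)‖ = Real.exp (φ w) := fun w hw => by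
    rw [norm_exp, hφf w hw]
  have hdiff : ∀ᶠ w in 𝓝 z, DifferentiableAt ℂ (fun w => cexp (f w)) w :=
    (hf.cexp.eventually_differentiableAt hV')
  have hmax' : IsLocalMax (norm ∘ fun w => cexp (f w)) z := by
    filter_upwards [hmax, hV'] with w hw hwV
    simp only [comp_apply, hnorm w hwV, hnorm z hzV]
    exact Real.exp_le_exp.2 hw
  filter_upwards [Complex.norm_eventually_eq_of_isLocalMax hdiff hmax', hV'] with w hw hwV
  rwa [hnorm w hwV, hnorm z hzV, Real.exp_eq_exp] at hw

theorem HarmonicOnC.eqOn_of_isPreconnected_of_isMaxOn {φ : ℂ → ℝ} {U : Set ℂ} {c : ℂ}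
    (h : HarmonicOnC φ U) (hU : IsPreconnected U) (hcU : c ∈ U) (hm : IsMaxOn φ U c) :
    EqOn φ (const ℂ (φ c)) U := by
  set V := U ∩ {z | IsMaxOn φ U z}
  have hV : ∀ x ∈ V, φ x = φ c := fun x hx => le_antisymm (hm hx.1) (hx.2 hcU)
  suffices U ⊆ V from fun x hx => hV x (this hx)
  have hVo : IsOpen V := by
    refine isOpen_iff_mem_nhds.2 fun z hz => ?_
    filter_upwards [h.isOpen.mem_nhds hz.1,
      h.eventually_eq_of_isLocalMax hz.1 (hz.2.isLocalMax (h.isOpen.mem_nhds hz.1))]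
      with w hwU hw
    exact ⟨hwU, fun y hy => (hz.2 hy).out.trans_eq hw.symm⟩
  have hVne : (U ∩ V).Nonempty := ⟨c, hcU, hcU, hm⟩
  set W := U ∩ {z | φ z ≠ φ c}
  have hWo : IsOpen W := h.continuousOn.isOpen_inter_preimage h.isOpen isOpen_ne
  have hdVW : Disjoint V W := disjoint_left.mpr fun x hxV hxW => hxW.2 (hV x hxV)
  have hUVW : U ⊆ V ∪ W := fun x hx =>
    (eq_or_ne (φ x) (φ c)).imp (fun h => ⟨hx, fun y hy => (hm hy).out.trans_eq h.symm⟩)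
      (And.intro hx)
  exact hU.subset_left_of_subset_union hVo hWo hdVW hUVW hVne

theorem Function.Periodic.exists_im_mem_Ico {α : Type*} {ψ : ℂ → α} {c : ℝ}
    (h : Periodic ψ (c * I)) (hc : 0 < c) (w : ℂ) :
    ∃ w' : ℂ, w'.re = w.re ∧ w'.im ∈ Ico 0 c ∧ ψ w = ψ w' := by
  have hper : Periodic (fun t : ℝ => ψ (w.re + t * I)) c := fun t => by
    simpa [add_mul, add_assoc] using h (w.re + t * I)
  obtain ⟨t, ht, hwt⟩ := hper.exists_mem_Ico₀ hc w.im
  exact ⟨w.re + t * I, by simp, by simpa using ht, by simpa [re_add_im] using hwt⟩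

section PeriodicStrip

variable {ψ : ℂ → ℝ} {a b : ℝ}

theorem Function.Periodic.exists_isMaxOn_re_preimage_Icc {c : ℝ} (h : Periodic ψ (c * I))
    (hc : 0 < c) (hab : a ≤ b) (hcont : ContinuousOn ψ (re ⁻¹' Icc a b)) :
    ∃ z ∈ re ⁻¹' Icc a b, IsMaxOn ψ (re ⁻¹' Icc a b) z := by
  have hK : Icc a b ×ℂ Icc 0 c ⊆ re ⁻¹' Icc a b := fun z hz => hz.1
  obtain ⟨z, hzK, hmax⟩ := (isCompact_Icc.reProdIm isCompact_Icc).exists_isMaxOn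
    (reProdIm_nonempty.2 ⟨nonempty_Icc.2 hab, nonempty_Icc.2 hc.le⟩) (hcont.mono hK)
  refine ⟨z, hK hzK, fun w hw => ?_⟩
  obtain ⟨w', hre, him, hw'⟩ := h.exists_im_mem_Ico hc w
  rw [mem_ofPred_eq, hw']
  exact hmax ⟨by rw [mem_preimage, hre]; exact hw, Ico_subset_Icc_self him⟩

theorem HarmonicOnC.le_of_periodic_of_le_on_boundary (hψ : HarmonicOnC ψ (re ⁻¹' Ioo a b))
    (hper : Periodic ψ (2 * Real.pi * I)) (hcont : ContinuousOn ψ (re ⁻¹' Icc a b))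
    (hab : a < b) {C : ℝ}
    (ha : ∀ z : ℂ, z.re = a → ψ z ≤ C) (hb : ∀ z : ℂ, z.re = b → ψ z ≤ C) :
    ∀ z ∈ re ⁻¹' Icc a b, ψ z ≤ C := by
  have hper' : Periodic ψ ((2 * Real.pi : ℝ) * I) := by push_cast; exact hper
  obtain ⟨z₀, hz₀, hmax⟩ := hper'.exists_isMaxOn_re_preimage_Icc Real.two_pi_pos hab.le hcont
  suffices ψ z₀ ≤ C from fun z hz => (hmax hz).out.trans this
  rcases eq_or_lt_of_le hz₀.1 with hz₀a | hz₀a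
  · exact ha z₀ hz₀a.symm
  rcases eq_or_lt_of_le hz₀.2 with hz₀b | hz₀b
  · exact hb z₀ hz₀b
  have hclosure : closure (re ⁻¹' Ioo a b) = re ⁻¹' Icc a b := by
    rw [closure_preimage_re, closure_Ioo hab.ne]
  have hconst := (hψ.eqOn_of_isPreconnected_of_isMaxOn
    ((convex_Ioo a b).linear_preimage reLm).isPreconnected ⟨hz₀a, hz₀b⟩
    (hmax.on_subset (preimage_mono Ioo_subset_Icc_self))).of_subset_closure hcont continuousOn_const
    (preimage_mono Ioo_subset_Icc_self) hclosure.ge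
  have hb' : (b : ℂ) ∈ re ⁻¹' Icc a b := by simp [hab.le]
  calc ψ z₀ = ψ b := (hconst hb').symm
    _ ≤ C := hb b (ofReal_re b)

theorem HarmonicOnC.le_interpolation_of_periodic {A B : ℝ}
    (hψ : HarmonicOnC ψ (re ⁻¹' Ioo a b)) (hper : Periodic ψ (2 * Real.pi * I))
    (hcont : ContinuousOn ψ (re ⁻¹' Icc a b)) (hab : a < b)
    (ha : ∀ z : ℂ, z.re = a → ψ z ≤ A) (hb : ∀ z : ℂ, z.re = b → ψ z ≤ B) :
    ∀ z ∈ re ⁻¹' Icc a b, ψ z ≤ ((b - z.re) * A + (z.re - a) * B) / (b - a) := by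
  set α := (b * A - a * B) / (b - a)
  set β := (B - A) / (b - a)
  have hL : ∀ x : ℝ, α + β * x = ((b - x) * A + (x - a) * B) / (b - a) := fun x => by ring
  have hba : b - a ≠ 0 := sub_ne_zero.2 hab.ne'
  have hle := (hψ.sub (harmonicOnC_const_add_mul_re hψ.isOpen α β)).le_of_periodic_of_le_on_boundary
    (C := 0) (fun z => by simp [hper z]) (hcont.sub (by fun_prop)) hab
    (fun z hz => by simpa [hL, hz, hba, sub_nonpos] using ha z hz)
    (fun z hz => by simpa [hL, hz, hba, sub_nonpos] using hb z hz)
  exact fun z hz => by simpa [← hL, sub_nonpos] using hle z hz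

theorem HarmonicOnC.abs_le_interpolation_of_periodic {A B : ℝ}
    (hψ : HarmonicOnC ψ (re ⁻¹' Ioo a b)) (hper : Periodic ψ (2 * Real.pi * I))
    (hcont : ContinuousOn ψ (re ⁻¹' Icc a b)) (hab : a < b)
    (ha : ∀ z : ℂ, z.re = a → |ψ z| ≤ A) (hb : ∀ z : ℂ, z.re = b → |ψ z| ≤ B) :
    ∀ z ∈ re ⁻¹' Icc a b, |ψ z| ≤ ((b - z.re) * A + (z.re - a) * B) / (b - a) := fun z hz =>
  abs_le'.2
    ⟨hψ.le_interpolation_of_periodic hper hcont hab (fun w hw => (abs_le'.1 (ha w hw)).1)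
      (fun w hw => (abs_le'.1 (hb w hw)).1) z hz,
    hψ.neg.le_interpolation_of_periodic (fun w => by simp [hper w]) hcont.neg hab
      (fun w hw => (abs_le'.1 (ha w hw)).2) (fun w hw => (abs_le'.1 (hb w hw)).2) z hz⟩

end PeriodicStrip

theorem abs_sub_convex_combination_le {x x₁ x₂ q δ₁ δ₂ : ℝ} (hq₀ : 0 ≤ q) (hq₁ : q ≤ 1)
    (h₁ : |x - x₁| ≤ δ₁) (h₂ : |x - x₂| ≤ δ₂) :
    |x - ((1 - q) * x₁ + q * x₂)| ≤ (1 - q) * δ₁ + q * δ₂ :=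
  calc |x - ((1 - q) * x₁ + q * x₂)| = |(1 - q) * (x - x₁) + q * (x - x₂)| := by ring_nf
    _ ≤ (1 - q) * |x - x₁| + q * |x - x₂| := by
      refine (abs_add_le _ _).trans ?_
      rw [abs_mul, abs_mul, abs_of_nonneg (sub_nonneg.2 hq₁), abs_of_nonneg hq₀]
    _ ≤ (1 - q) * δ₁ + q * δ₂ := by gcongr

theorem stmt_11_general (M u ε : ℝ) (hu : 0 < u) (hε : 0 < ε) :
    ∃ r₀ : ℝ, u < r₀ ∧ ∀ r : ℝ, r₀ ≤ r →
      ∀ φ φ₁ φᵣ : ℂ → ℝ,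
        -- all three functions are `2πi`-periodic (functions on the cylinder)
        (∀ z : ℂ, φ (z + 2 * Real.pi * Complex.I) = φ z) →
        (∀ z : ℂ, φ₁ (z + 2 * Real.pi * Complex.I) = φ₁ z) →
        (∀ z : ℂ, φᵣ (z + 2 * Real.pi * Complex.I) = φᵣ z) →
        -- `φ` is harmonic in the annulus, continuous up to its boundary, bounded by `M`
        HarmonicOnC φ {z : ℂ | -r < z.re ∧ z.re < 0} →
        ContinuousOn φ {z : ℂ | -r ≤ z.re ∧ z.re ≤ 0} →
        (∀ z : ℂ, -r ≤ z.re → z.re ≤ 0 → |φ z| ≤ M) →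
        -- `φ₁` is bounded harmonic on `{Re z < 0}` with boundary values `φ` on `{Re z = 0}`
        HarmonicOnC φ₁ {z : ℂ | z.re < 0} →
        ContinuousOn φ₁ {z : ℂ | z.re ≤ 0} →
        (∀ z : ℂ, z.re ≤ 0 → |φ₁ z| ≤ M) →
        (∀ z : ℂ, z.re = 0 → φ₁ z = φ z) →
        -- `φᵣ` is bounded harmonic on `{Re z > -r}` with boundary values `φ` on `{Re z = -r}`
        HarmonicOnC φᵣ {z : ℂ | -r < z.re} →
        ContinuousOn φᵣ {z : ℂ | -r ≤ z.re} →
        (∀ z : ℂ, -r ≤ z.re → |φᵣ z| ≤ M) →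
        (∀ z : ℂ, z.re = -r → φᵣ z = φ z) →
        ∀ z : ℂ, z.re = -u →
          |φ z - ((1 - u / r) * φ₁ z + (u / r) * φᵣ z)| ≤ ε := by
  refine ⟨max (u + 1) (4 * M * u / ε), by simp, ?_⟩
  intro r hr φ φ₁ φᵣ hper hper₁ hperᵣ hφ hφc hφM hφ₁ hφ₁c hφ₁M hφ₁φ hφᵣ hφᵣc hφᵣM hφᵣφ z hz
  have hur : u < r := by linarith [le_max_left (u + 1) (4 * M * u / ε)]
  have hr : 0 < r := hu.trans hur
  have hzS : z ∈ re ⁻¹' Icc (-r) 0 := ⟨by linarith, by linarith⟩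
  have h₁ := (hφ.sub (hφ₁.mono hφ.isOpen fun w hw => hw.2)).abs_le_interpolation_of_periodic
    (a := -r) (b := 0) (A := 2 * M) (B := 0) (fun w => by simp [hper w, hper₁ w])
    (hφc.sub (hφ₁c.mono fun w hw => hw.2)) (by linarith)
    (fun w hw => (abs_sub _ _).trans
      (by linarith [hφM w hw.ge (by linarith), hφ₁M w (by linarith)]))
    (fun w hw => by simp [hφ₁φ w hw]) z hzS
  have hᵣ := (hφ.sub (hφᵣ.mono hφ.isOpen fun w hw => hw.1)).abs_le_interpolation_of_periodic
    (a := -r) (b := 0) (A := 0) (B := 2 * M) (fun w => by simp [hper w, hperᵣ w])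
    (hφc.sub (hφᵣc.mono fun w hw => hw.1)) (by linarith)
    (fun w hw => by simp [hφᵣφ w hw])
    (fun w hw => (abs_sub _ _).trans
      (by linarith [hφM w (by linarith) hw.le, hφᵣM w (by linarith)]))
    z hzS
  have hM : 0 ≤ M := (abs_nonneg _).trans (hφM z hzS.1 hzS.2)
  have hq₀ : 0 ≤ u / r := by positivity
  have hq₁ : u / r ≤ 1 := (div_le_one hr).2 hur.le
  have hrε : 4 * M * u ≤ ε * r :=
    (div_le_iff₀' hε).1 (le_trans (le_max_right _ _) ‹_ ≤ r›)
  rw [hz, Pi.sub_apply] at h₁ hᵣ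
  replace h₁ : |φ z - φ₁ z| ≤ 2 * M * (u / r) := h₁.trans_eq (by ring)
  replace hᵣ : |φ z - φᵣ z| ≤ 2 * M * (1 - u / r) := hᵣ.trans_eq (by field_simp [hr.ne']; ring)
  calc |φ z - ((1 - u / r) * φ₁ z + u / r * φᵣ z)|
      ≤ (1 - u / r) * (2 * M * (u / r)) + u / r * (2 * M * (1 - u / r)) :=
        abs_sub_convex_combination_le hq₀ hq₁ h₁ hᵣ
    _ ≤ 4 * M * (u / r) := by nlinarith [mul_nonneg hM (mul_nonneg hq₀ hq₀)]
    _ ≤ ε := by rw [mul_div_assoc']; exact (div_le_iff₀ hr).2 hrε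

/-- Harmonic interpolation on the cylinder annulus `[-r,0] × [0,2π]` (realized as the
`2πi`-periodic strip `{-r ≤ Re z ≤ 0}` in `ℂ`): if `φ` is harmonic in the annulus,
continuous up to the boundary and bounded by `M`, and `φ₁` (resp. `φᵣ`) is the bounded
harmonic function on the half-cylinder `{Re z ≤ 0}` (resp. `{Re z ≥ -r}`) with the same
boundary values as `φ` on `{Re z = 0}` (resp. `{Re z = -r}`), then for `Re z = -u`,
`φ(z) = (1 - u/r) φ₁(z) + (u/r) φᵣ(z) + o(1)` as `r → ∞`, uniformly over boundary data
bounded by `M`. -/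
theorem stmt_11 (M u ε : ℝ) (hM : 0 < M) (hu : 0 < u) (hε : 0 < ε) :
    ∃ r₀ : ℝ, u < r₀ ∧ ∀ r : ℝ, r₀ ≤ r →
      ∀ φ φ₁ φᵣ : ℂ → ℝ,
        -- all three functions are `2πi`-periodic (functions on the cylinder)
        (∀ z : ℂ, φ (z + 2 * Real.pi * Complex.I) = φ z) →
        (∀ z : ℂ, φ₁ (z + 2 * Real.pi * Complex.I) = φ₁ z) →
        (∀ z : ℂ, φᵣ (z + 2 * Real.pi * Complex.I) = φᵣ z) →
        -- `φ` is harmonic in the annulus, continuous up to its boundary, bounded by `M`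
        HarmonicOnC φ {z : ℂ | -r < z.re ∧ z.re < 0} →
        ContinuousOn φ {z : ℂ | -r ≤ z.re ∧ z.re ≤ 0} →
        (∀ z : ℂ, -r ≤ z.re → z.re ≤ 0 → |φ z| ≤ M) →
        -- `φ₁` is bounded harmonic on `{Re z < 0}` with boundary values `φ` on `{Re z = 0}`
        HarmonicOnC φ₁ {z : ℂ | z.re < 0} →
        ContinuousOn φ₁ {z : ℂ | z.re ≤ 0} →
        (∀ z : ℂ, z.re ≤ 0 → |φ₁ z| ≤ M) →
        (∀ z : ℂ, z.re = 0 → φ₁ z = φ z) →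
        -- `φᵣ` is bounded harmonic on `{Re z > -r}` with boundary values `φ` on `{Re z = -r}`
        HarmonicOnC φᵣ {z : ℂ | -r < z.re} →
        ContinuousOn φᵣ {z : ℂ | -r ≤ z.re} →
        (∀ z : ℂ, -r ≤ z.re → |φᵣ z| ≤ M) →
        (∀ z : ℂ, z.re = -r → φᵣ z = φ z) →
        ∀ z : ℂ, z.re = -u →
          |φ z - ((1 - u / r) * φ₁ z + (u / r) * φᵣ z)| ≤ ε :=
  stmt_11_general M u ε hu hε
end
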